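/- Let k ≥ 1 and n be integers with 2k + 1 ≤ n ≤ 2k + 3. There exists a constant C = C(n, k) > 0 such that for all real numbers 0 < δ < 1 and 0 < μ ≤ 𝔠_{n,k}^{−3/2} δ³, for every integer 0 ≤ j ≤ 2k, and for every x ∈ ℝⁿ with 3δ/4 ≤ |x| ≤ 9δ/4, the j-th iterated Fréchet derivative of the function f(y) := (μ² + 𝔠_{n,k}^{−1}|y|²)^{(2k−n)/2} − 𝔠_{n,k}^{(n−2k)/2}|y|^{2k−n} (which is smooth on ℝⁿ ∖ {0}) satisfies ‖D^j f(x)‖ ≤ C · δ^{−j}. -/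

import Mathlib

open MeasureTheory Real

/-- The constant `𝔠_{n,k} := (∏_{j=-k}^{k-1} (n+2j))^{1/k}` (reindexed by `j ↦ j - k`). -/
noncomputable def cnk (n k : ℕ) : ℝ :=
  (∏ j ∈ Finset.range (2 * k), ((n : ℝ) + 2 * j - 2 * k)) ^ ((k : ℝ)⁻¹)

/-!
With `p = (2k - n) / 2` and `b = 𝔠⁻¹ δ²`, the function is `G (‖y‖² / δ²)` where
`G t = (μ² + b t)^p - (b t)^p`. The `i`-th derivative of `G` is a multiple of
`(μ² + b t)^(p-i) - (b t)^(p-i)`, which the mean value theorem bounds on `t ≥ 1/2` by a multiple of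
`b^(p-1) μ² ≤ 𝔠^(-p-2) δ^(2p+4)`; this is bounded because `μ ≲ δ³` and `p ≥ -2`. On the annulus
the derivatives of `y ↦ ‖y‖² / δ²` are at most `(5/δ)^i`, so the Faà di Bruno bound gives
`‖D^j f x‖ ≤ j! C (5/δ)^j`.
-/

open Set Finset

section NormSq

variable {E : Type*} [NormedAddCommGroup E] [InnerProductSpace ℝ E]

theorem fderiv_norm_sq_eq_smul_innerSL :
    fderiv ℝ (fun y : E => ‖y‖ ^ 2) = ⇑((2 : ℝ) • innerSL ℝ (E := E)) := by
  rw [fderiv_norm_sq]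
  ext x y
  simp [two_smul]

theorem fderiv_fderiv_norm_sq :
    fderiv ℝ (fderiv ℝ fun y : E => ‖y‖ ^ 2) = fun _ => (2 : ℝ) • innerSL ℝ (E := E) := by
  rw [fderiv_norm_sq_eq_smul_innerSL]
  exact funext fun _ => ContinuousLinearMap.fderiv _

theorem norm_iteratedFDeriv_one_norm_sq (z : E) :
    ‖iteratedFDeriv ℝ 1 (fun y : E => ‖y‖ ^ 2) z‖ = 2 * ‖z‖ := by
  rw [norm_iteratedFDeriv_one, fderiv_norm_sq_eq_smul_innerSL, smul_apply,
    norm_smul, innerSL_apply_norm, Real.norm_two]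

theorem norm_iteratedFDeriv_two_norm_sq_le (z : E) :
    ‖iteratedFDeriv ℝ 2 (fun y : E => ‖y‖ ^ 2) z‖ ≤ 2 := by
  rw [← norm_iteratedFDeriv_fderiv, norm_iteratedFDeriv_one, fderiv_fderiv_norm_sq, norm_smul,
    Real.norm_two]
  linarith [norm_innerSL_le ℝ (E := E)]

theorem iteratedFDeriv_norm_sq_eq_zero (z : E) {i : ℕ} (hi : 3 ≤ i) :
    iteratedFDeriv ℝ i (fun y : E => ‖y‖ ^ 2) z = 0 := by
  obtain ⟨m, rfl⟩ : ∃ m, i = m + 1 + 1 + 1 := ⟨i - 3, by omega⟩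
  rw [← norm_eq_zero, ← norm_iteratedFDeriv_fderiv, ← norm_iteratedFDeriv_fderiv,
    fderiv_fderiv_norm_sq, iteratedFDeriv_const_of_ne (by omega), Pi.zero_apply, norm_zero]

theorem norm_iteratedFDeriv_const_mul_norm_sq_le {r D : ℝ} (z : E) {i : ℕ} (hr : 0 ≤ r)
    (hi : 1 ≤ i) (h₁ : 2 * r * ‖z‖ ≤ D) (h₂ : 2 * r ≤ D ^ 2) :
    ‖iteratedFDeriv ℝ i (fun y : E => r * ‖y‖ ^ 2) z‖ ≤ D ^ i := by
  have hQ : ContDiffAt ℝ i (fun y : E => ‖y‖ ^ 2) z := (contDiff_norm_sq ℝ).contDiffAt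
  rw [show (fun y : E => r * ‖y‖ ^ 2) = r • fun y : E => ‖y‖ ^ 2 from rfl,
    iteratedFDeriv_const_smul_apply hQ, norm_smul, Real.norm_of_nonneg hr]
  have hD : 0 ≤ D := le_trans (by positivity) h₁
  rcases (show i = 1 ∨ i = 2 ∨ 3 ≤ i by omega) with rfl | rfl | hi3
  · rw [norm_iteratedFDeriv_one_norm_sq]; linarith
  · nlinarith [norm_iteratedFDeriv_two_norm_sq_le z]
  · rw [iteratedFDeriv_norm_sq_eq_zero z hi3, norm_zero, mul_zero]; positivity

end NormSq

section RpowAffine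

theorem abs_add_rpow_sub_rpow_le {u B q : ℝ} (hu : 0 ≤ u) (hB : 0 < B) (hq : q ≤ 1) :
    |(u + B) ^ q - B ^ q| ≤ |q| * B ^ (q - 1) * u := by
  have hderiv : ∀ y ∈ Ici B, HasDerivWithinAt (fun y : ℝ => y ^ q) (q * y ^ (q - 1)) (Ici B) y :=
    fun y hy => (Real.hasDerivAt_rpow_const (Or.inl (hB.trans_le hy).ne')).hasDerivWithinAt
  have hbound : ∀ y ∈ Ici B, ‖q * y ^ (q - 1)‖ ≤ |q| * B ^ (q - 1) := fun y hy => by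
    rw [Real.norm_eq_abs, abs_mul, abs_of_nonneg (Real.rpow_nonneg (hB.trans_le hy).le _)]
    exact mul_le_mul_of_nonneg_left
      (Real.rpow_le_rpow_of_nonpos hB hy (by linarith)) (abs_nonneg q)
  have := (convex_Ici B).norm_image_sub_le_of_norm_hasDerivWithin_le hderiv hbound
    self_mem_Ici (show u + B ∈ Ici B by simpa using hu)
  simpa [abs_of_nonneg hu] using this

variable {a b : ℝ}

theorem contDiffOn_rpow_affine_sub (ha : 0 ≤ a) (hb : 0 < b) (p : ℝ) :
    ContDiffOn ℝ ⊤ (fun t => (a + b * t) ^ p - (b * t) ^ p) (Ioi 0) := fun t ht => by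
  have ht : 0 < t := ht
  have h₁ : a + b * t ≠ 0 := by positivity
  have h₂ : b * t ≠ 0 := by positivity
  have hA : ContDiffAt ℝ ⊤ (fun t : ℝ => a + b * t) t := by fun_prop
  have hB : ContDiffAt ℝ ⊤ (fun t : ℝ => b * t) t := by fun_prop
  exact (((Real.contDiffAt_rpow_const_of_ne h₁).comp t hA).sub
    ((Real.contDiffAt_rpow_const_of_ne h₂).comp t hB)).contDiffWithinAt

theorem iteratedDerivWithin_rpow_affine_sub (ha : 0 ≤ a) (hb : 0 < b) (p : ℝ) (i : ℕ) :
    EqOn (iteratedDerivWithin i (fun t => (a + b * t) ^ p - (b * t) ^ p) (Ioi 0))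
      (fun t => (∏ l ∈ range i, (p - l)) * b ^ i * ((a + b * t) ^ (p - i) - (b * t) ^ (p - i)))
      (Ioi 0) := by
  induction i with
  | zero => intro t _; simp
  | succ i ih =>
    intro t ht
    have ht : 0 < t := ht
    have h₁ : HasDerivAt (fun t => (a + b * t) ^ (p - i))
        (b * (p - i) * (a + b * t) ^ (p - i - 1)) t :=
      (((hasDerivAt_id t).const_mul b).const_add a).rpow_const (Or.inl (by positivity))
        |>.congr_deriv (by simp)
    have h₂ : HasDerivAt (fun t => (b * t) ^ (p - i)) (b * (p - i) * (b * t) ^ (p - i - 1)) t :=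
      ((hasDerivAt_id t).const_mul b).rpow_const (Or.inl (by positivity)) |>.congr_deriv (by simp)
    have h : HasDerivAt
        (fun t => (∏ l ∈ range i, (p - l)) * b ^ i * ((a + b * t) ^ (p - i) - (b * t) ^ (p - i)))
        ((∏ l ∈ range i, (p - l)) * b ^ i *
          (b * (p - i) * (a + b * t) ^ (p - i - 1) - b * (p - i) * (b * t) ^ (p - i - 1))) t :=
      (h₁.sub h₂).const_mul _
    rw [iteratedDerivWithin_succ, derivWithin_congr ih (ih ht),
      h.hasDerivWithinAt.derivWithin (isOpen_Ioi.uniqueDiffWithinAt ht)]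
    push_cast
    rw [prod_range_succ, show p - (i + 1) = p - i - 1 by ring]
    ring

theorem abs_iteratedDerivWithin_rpow_affine_sub_le {p τ t : ℝ} (ha : 0 ≤ a) (hb : 0 < b)
    (hp : p ≤ 1) (hτ : 0 < τ) (hτt : τ ≤ t) (i : ℕ) :
    |iteratedDerivWithin i (fun t => (a + b * t) ^ p - (b * t) ^ p) (Ioi 0) t| ≤
      (∏ l ∈ range (i + 1), |p - l|) * τ ^ (p - i - 1) * b ^ (p - 1) * a := by
  have ht : 0 < t := hτ.trans_le hτt
  have hmvt := abs_add_rpow_sub_rpow_le ha (mul_pos hb ht) (show p - i ≤ 1 by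
    linarith [(Nat.cast_nonneg i : (0 : ℝ) ≤ i)])
  have hmono : (b * t) ^ (p - i - 1) ≤ (b * τ) ^ (p - i - 1) :=
    Real.rpow_le_rpow_of_nonpos (by positivity) (by gcongr)
      (by linarith [(Nat.cast_nonneg i : (0 : ℝ) ≤ i)])
  have hsplit : b ^ i * (b * τ) ^ (p - i - 1) = τ ^ (p - i - 1) * b ^ (p - 1) := by
    rw [Real.mul_rpow hb.le hτ.le, ← Real.rpow_natCast, ← mul_assoc, ← Real.rpow_add hb]
    ring_nf
  rw [iteratedDerivWithin_rpow_affine_sub ha hb p i ht, abs_mul, abs_mul, abs_prod,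
    abs_of_pos (pow_pos hb i), prod_range_succ]
  calc (∏ l ∈ range i, |p - l|) * b ^ i * |(a + b * t) ^ (p - i) - (b * t) ^ (p - i)|
      ≤ (∏ l ∈ range i, |p - l|) * b ^ i * (|p - i| * (b * τ) ^ (p - i - 1) * a) := by
        gcongr
        exact hmvt.trans (by gcongr)
    _ = (∏ l ∈ range i, |p - l|) * |p - i| * (b ^ i * (b * τ) ^ (p - i - 1)) * a := by ring
    _ = _ := by rw [hsplit]; ring

end RpowAffine

theorem cnk_pos {n k : ℕ} (h : 2 * k < n) : 0 < cnk n k := by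
  have hn : (2 * k : ℝ) + 1 ≤ n := by exact_mod_cast h
  refine Real.rpow_pos_of_pos (prod_pos fun j _ => ?_) _
  linarith [(Nat.cast_nonneg j : (0 : ℝ) ≤ j)]

theorem rpow_neg_mul_rpow_two_mul {c r : ℝ} (hc : 0 < c) (hr : 0 ≤ r) (p : ℝ) :
    c ^ (-p) * r ^ (2 * p) = (c⁻¹ * r ^ 2) ^ p := by
  rw [Real.mul_rpow (inv_nonneg.2 hc.le) (by positivity), Real.inv_rpow hc.le, Real.rpow_neg hc.le,
    Real.rpow_mul hr, Real.rpow_two]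

theorem rpow_sub_one_mul_sq_le {c δ μ p : ℝ} (hc : 0 < c) (hδ : 0 < δ) (hδ₁ : δ ≤ 1)
    (hμ : 0 ≤ μ) (hμδ : μ ≤ c ^ (-(3 / 2 : ℝ)) * δ ^ 3) (hp : -2 ≤ p) :
    (c⁻¹ * δ ^ 2) ^ (p - 1) * μ ^ 2 ≤ c ^ (-p - 2) :=
  calc (c⁻¹ * δ ^ 2) ^ (p - 1) * μ ^ 2
      ≤ (c⁻¹ * δ ^ 2) ^ (p - 1) * (c ^ (-(3 / 2 : ℝ)) * δ ^ 3) ^ 2 := by gcongr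
    _ = c ^ (-p - 2) * δ ^ (2 * p + 4) := by
      rw [← rpow_neg_mul_rpow_two_mul hc hδ.le, mul_pow, ← Real.rpow_natCast, ← Real.rpow_natCast,
        ← Real.rpow_natCast, ← Real.rpow_mul hc.le, ← Real.rpow_mul hδ.le]
      rw [mul_mul_mul_comm, ← Real.rpow_add hc, ← Real.rpow_add hδ]
      congr 2 <;> push_cast <;> ring
    _ ≤ c ^ (-p - 2) := by
      refine mul_le_of_le_one_right (by positivity) (Real.rpow_le_one hδ.le hδ₁ (by linarith))

theorem norm_iteratedFDeriv_rpow_add_sub_rpow_le {E : Type*} [NormedAddCommGroup E]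
    [InnerProductSpace ℝ E] {a b p δ C : ℝ} (ha : 0 ≤ a) (hb : 0 < b) (hp : p ≤ 1) (hδ : 0 < δ)
    {x : E} (hx₁ : 3 * δ / 4 ≤ ‖x‖) (hx₂ : ‖x‖ ≤ 9 * δ / 4) {j : ℕ}
    (hC : ∀ i ≤ j,
      (∏ l ∈ range (i + 1), |p - l|) * (1 / 2) ^ (p - i - 1) * (b * δ ^ 2) ^ (p - 1) * a ≤ C) :
    ‖iteratedFDeriv ℝ j (fun y : E => (a + b * ‖y‖ ^ 2) ^ p - (b * ‖y‖ ^ 2) ^ p) x‖ ≤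
      j.factorial * C * (5 / δ) ^ j := by
  set r := (δ ^ 2)⁻¹
  have hr : 0 < r := by positivity
  have hx : x ≠ 0 := norm_pos_iff.1 (by linarith)
  -- Measuring `‖y‖ ^ 2` in units of `δ ^ 2` makes the derivatives of the outer function bounded.
  have hfactor : (fun y : E => (a + b * ‖y‖ ^ 2) ^ p - (b * ‖y‖ ^ 2) ^ p) =
      (fun t => (a + b * δ ^ 2 * t) ^ p - (b * δ ^ 2 * t) ^ p) ∘ fun y => r * ‖y‖ ^ 2 := by
    funext y
    simp only [Function.comp_apply, r]
    field_simp
  have hmaps : MapsTo (fun y : E => r * ‖y‖ ^ 2) {y | y ≠ 0} (Ioi 0) :=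
    fun y hy => mul_pos hr (pow_pos (norm_pos_iff.2 hy) 2)
  have hrx : 1 / 2 ≤ r * ‖x‖ ^ 2 := by
    have : 3 / 4 ≤ ‖x‖ / δ := by rw [le_div_iff₀ hδ]; linarith
    rw [show r * ‖x‖ ^ 2 = (‖x‖ / δ) ^ 2 by simp only [r]; field_simp]
    nlinarith
  have hG : ∀ i ≤ j, ‖iteratedFDerivWithin ℝ i (fun t => (a + b * δ ^ 2 * t) ^ p -
      (b * δ ^ 2 * t) ^ p) (Ioi 0) (r * ‖x‖ ^ 2)‖ ≤ C := fun i hi => by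
    rw [norm_iteratedFDerivWithin_eq_norm_iteratedDerivWithin, Real.norm_eq_abs]
    exact (abs_iteratedDerivWithin_rpow_affine_sub_le ha (by positivity) hp (by norm_num) hrx
      i).trans (hC i hi)
  have hq : ∀ i, 1 ≤ i → i ≤ j →
      ‖iteratedFDerivWithin ℝ i (fun y : E => r * ‖y‖ ^ 2) {y | y ≠ 0} x‖ ≤ (5 / δ) ^ i := by
    intro i hi _
    rw [iteratedFDerivWithin_of_isOpen i isOpen_ne hx]
    refine norm_iteratedFDeriv_const_mul_norm_sq_le x hr.le hi ?_ ?_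
    · calc 2 * r * ‖x‖ ≤ 2 * r * (9 * δ / 4) := by gcongr
        _ = 9 / 2 / δ := by simp only [r]; field_simp; ring
        _ ≤ 5 / δ := by gcongr; norm_num
    · have : (5 / δ) ^ 2 = 25 * r := by simp only [r]; field_simp; norm_num
      linarith
  have hbound := norm_iteratedFDerivWithin_comp_le
    (contDiffOn_rpow_affine_sub ha (by positivity) p)
    (contDiff_const.mul (contDiff_norm_sq ℝ)).contDiffOn le_top (uniqueDiffOn_Ioi 0)
    isOpen_ne.uniqueDiffOn hmaps hx hG hq
  rwa [iteratedFDerivWithin_of_isOpen j isOpen_ne hx, ← hfactor] at hbound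

theorem stmt17_general (k n : ℕ) (h1 : 2 * k + 1 ≤ n) (h2 : n ≤ 2 * k + 3) :
    ∃ C : ℝ, 0 < C ∧
      ∀ δ μ : ℝ, 0 < δ → δ < 1 → 0 < μ → μ ≤ cnk n k ^ (-(3 / 2 : ℝ)) * δ ^ 3 →
      ∀ j : ℕ, j ≤ 2 * k →
      ∀ x : EuclideanSpace ℝ (Fin n), 3 * δ / 4 ≤ ‖x‖ → ‖x‖ ≤ 9 * δ / 4 →
        ‖iteratedFDeriv ℝ j
            (fun y : EuclideanSpace ℝ (Fin n) =>
              (μ ^ 2 + (cnk n k)⁻¹ * ‖y‖ ^ 2) ^ (((2 * k : ℝ) - n) / 2) -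
                cnk n k ^ (((n : ℝ) - 2 * k) / 2) * ‖y‖ ^ ((2 * k : ℝ) - n)) x‖ ≤
          C * δ ^ (-(j : ℝ)) := by
  have hc : 0 < cnk n k := cnk_pos (by omega)
  set c := cnk n k
  obtain ⟨p, hp⟩ : ∃ p : ℝ, p = ((2 * k : ℝ) - n) / 2 := ⟨_, rfl⟩
  have hp₀ : p < 0 := by rw [hp]; linarith [show (2 * k : ℝ) + 1 ≤ n by exact_mod_cast h1]
  have hp₂ : -2 ≤ p := by rw [hp]; linarith [show (n : ℝ) ≤ 2 * k + 3 by exact_mod_cast h2]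
  set K : ℕ → ℝ := fun i => (∏ l ∈ range (i + 1), |p - l|) * (1 / 2) ^ (p - i - 1) * c ^ (-p - 2)
  have hK : 0 < K 0 := by
    simp only [K]
    exact mul_pos (mul_pos (prod_pos fun l _ => abs_pos.2 (sub_neg.2
      (hp₀.trans_le l.cast_nonneg)).ne) (by positivity)) (by positivity)
  set C := ∑ i ∈ range (2 * k + 1), K i
  have hKC : ∀ i ≤ 2 * k, K i ≤ C := fun i hi =>
    single_le_sum (fun i _ => by positivity) (mem_range.2 (by omega))
  have hC : 0 < C := hK.trans_le (hKC 0 (Nat.zero_le _))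
  refine ⟨(2 * k).factorial * C * 5 ^ (2 * k), by positivity, ?_⟩
  intro δ μ hδ hδ₁ hμ hμδ j hj x hx₁ hx₂
  have hfun : (fun y : EuclideanSpace ℝ (Fin n) =>
      (μ ^ 2 + c⁻¹ * ‖y‖ ^ 2) ^ (((2 * k : ℝ) - n) / 2) -
        c ^ (((n : ℝ) - 2 * k) / 2) * ‖y‖ ^ ((2 * k : ℝ) - n)) =
      fun y => (μ ^ 2 + c⁻¹ * ‖y‖ ^ 2) ^ p - (c⁻¹ * ‖y‖ ^ 2) ^ p := by
    funext y
    rw [← rpow_neg_mul_rpow_two_mul hc (norm_nonneg y), ← hp,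
      show ((n : ℝ) - 2 * k) / 2 = -p by rw [hp]; ring,
      show (2 * k : ℝ) - n = 2 * p by rw [hp]; ring]
  rw [hfun]
  calc _ ≤ j.factorial * C * (5 / δ) ^ j :=
        norm_iteratedFDeriv_rpow_add_sub_rpow_le (sq_nonneg μ) (inv_pos.2 hc) (by linarith) hδ
          hx₁ hx₂ fun i hi => by
            refine le_trans ?_ (hKC i (hi.trans hj))
            simp only [K]
            rw [mul_assoc _ (_ ^ _)]
            gcongr
            exact rpow_sub_one_mul_sq_le hc hδ hδ₁.le hμ.le hμδ hp₂
    _ = j.factorial * C * 5 ^ j * δ ^ (-(j : ℝ)) := by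
        rw [div_pow, Real.rpow_neg hδ.le, Real.rpow_natCast]; ring
    _ ≤ _ := by gcongr; norm_num

theorem stmt17 (k n : ℕ) (hk : 1 ≤ k) (h1 : 2 * k + 1 ≤ n) (h2 : n ≤ 2 * k + 3) :
    ∃ C : ℝ, 0 < C ∧
      ∀ δ μ : ℝ, 0 < δ → δ < 1 → 0 < μ → μ ≤ cnk n k ^ (-(3 / 2 : ℝ)) * δ ^ 3 →
      ∀ j : ℕ, j ≤ 2 * k →
      ∀ x : EuclideanSpace ℝ (Fin n), 3 * δ / 4 ≤ ‖x‖ → ‖x‖ ≤ 9 * δ / 4 →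
        ‖iteratedFDeriv ℝ j
            (fun y : EuclideanSpace ℝ (Fin n) =>
              (μ ^ 2 + (cnk n k)⁻¹ * ‖y‖ ^ 2) ^ (((2 * k : ℝ) - n) / 2) -
                cnk n k ^ (((n : ℝ) - 2 * k) / 2) * ‖y‖ ^ ((2 * k : ℝ) - n)) x‖ ≤
          C * δ ^ (-(j : ℝ)) :=
  stmt17_general k n h1 h2
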